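/- Fix E ∈ ℝ, real numbers η, η' > 0, a positive integer N, and an N×N real symmetric matrix H. Set z = E + iη and z' = E + i(η + η'), and let G = (H − z)^{−1} and G' = (H − z')^{−1}. Then for every j ∈ [1, N], min{|G'_{jj}|, |G_{jj}|} / max{|G'_{jj}|, |G_{jj}|} > 1 − η'/η. -/

import Mathlib

/-!
Write `G = (H - z)⁻¹` and `G' = (H - z')⁻¹`. The resolvent identity gives
`G'ⱼⱼ - Gⱼⱼ = i η' ∑ₖ Gⱼₖ G'ₖⱼ`; by Cauchy–Schwarz and the Ward identities
`∑ₖ |Gⱼₖ|² = Im Gⱼⱼ / η` and `∑ₖ |G'ₖⱼ|² = Im G'ⱼⱼ / (η + η')`, this yields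
`(|G'ⱼⱼ| - |Gⱼⱼ|)² ≤ η'² |Gⱼⱼ| |G'ⱼⱼ| / (η (η + η')) < (η' / η)² max(|Gⱼⱼ|, |G'ⱼⱼ|)²`,
and `min = max - |difference|`. The maximum is positive because `Im Gⱼⱼ > 0`: by Ward it is
`η` times the squared norm of a row of an invertible matrix.
-/

noncomputable section

/-- Resolvent of a real matrix at a complex spectral parameter. -/
def resMat {m : Type*} [Fintype m] [DecidableEq m] (A : Matrix m m ℝ) (z : ℂ) :
    Matrix m m ℂ :=
  ((A.map (fun x => (x : ℂ))) - z • (1 : Matrix m m ℂ))⁻¹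

open Matrix Complex ComplexConjugate

theorem Complex.im_eq_mul_of_sub_conj_eq {w z : ℂ} {s : ℝ} (h : w - conj w = (z - conj z) * s) :
    w.im = z.im * s := by
  simpa [sub_conj, mul_assoc] using congrArg im h

theorem norm_sum_mul_sq_le {ι R : Type*} [SeminormedRing R] (s : Finset ι) (f g : ι → R) :
    ‖∑ i ∈ s, f i * g i‖ ^ 2 ≤ (∑ i ∈ s, ‖f i‖ ^ 2) * ∑ i ∈ s, ‖g i‖ ^ 2 := by
  calc ‖∑ i ∈ s, f i * g i‖ ^ 2 ≤ (∑ i ∈ s, ‖f i‖ * ‖g i‖) ^ 2 := by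
        gcongr
        exact (norm_sum_le _ _).trans (Finset.sum_le_sum fun i _ => norm_mul_le _ _)
    _ ≤ _ := Finset.sum_mul_sq_le_sq_mul_sq _ _ _

namespace Matrix

variable {m : Type*}

theorem mul_conjTranspose_self_apply_self {n : Type*} [Fintype n] (M : Matrix m n ℂ) (j : m) :
    (M * Mᴴ) j j = ((∑ k, ‖M j k‖ ^ 2 : ℝ) : ℂ) := by
  simp [mul_apply, mul_conj']

variable [Fintype m]

theorem conjTranspose_mul_self_apply_self {n : Type*} (M : Matrix m n ℂ) (j : n) :
    (Mᴴ * M) j j = ((∑ k, ‖M k j‖ ^ 2 : ℝ) : ℂ) := by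
  simp [mul_apply, conj_mul']

theorem exists_apply_ne_zero_of_isUnit {R : Type*} [Semiring R] [Nontrivial R] [DecidableEq m]
    {M : Matrix m m R} (hM : IsUnit M) (j : m) : ∃ k, M j k ≠ 0 := by
  by_contra! h
  obtain ⟨N, hN⟩ := hM.exists_right_inv
  simpa [mul_apply, h] using congrFun (congrFun hN j) j

variable [DecidableEq m] {A : Matrix m m ℂ} {z w : ℂ}

theorem IsHermitian.isUnit_sub_smul_one (hA : A.IsHermitian) (hz : z.im ≠ 0) :
    IsUnit (A - z • 1) := by
  have hzA : z ∉ spectrum ℂ A := by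
    rw [hA.spectrum_eq_image_range]
    rintro ⟨x, -, rfl⟩
    simp at hz
  simpa [Algebra.algebraMap_eq_smul_one] using (spectrum.notMem_iff.mp hzA).neg

theorem inv_sub_smul_one_sub_inv (hz : IsUnit (A - z • 1)) (hw : IsUnit (A - w • 1)) :
    (A - z • 1)⁻¹ - (A - w • 1)⁻¹ = (z - w) • ((A - z • 1)⁻¹ * (A - w • 1)⁻¹) := by
  rw [inv_sub_inv (iff_of_true hz hw), sub_sub_sub_cancel_left, ← sub_smul, Matrix.mul_smul,
    Matrix.mul_one, Matrix.smul_mul]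

theorem inv_sub_smul_one_sub_inv' (hz : IsUnit (A - z • 1)) (hw : IsUnit (A - w • 1)) :
    (A - z • 1)⁻¹ - (A - w • 1)⁻¹ = (z - w) • ((A - w • 1)⁻¹ * (A - z • 1)⁻¹) := by
  rw [← neg_sub, inv_sub_smul_one_sub_inv hw hz, ← neg_smul, neg_sub]

theorem IsHermitian.conjTranspose_inv_sub_smul_one (hA : A.IsHermitian) (z : ℂ) :
    (A - z • 1)⁻¹ᴴ = (A - conj z • 1)⁻¹ := by
  rw [conjTranspose_nonsing_inv, conjTranspose_sub, hA.eq, conjTranspose_smul, conjTranspose_one]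
  rfl

theorem IsHermitian.sum_norm_sq_inv_sub_smul_one_apply (hA : A.IsHermitian) (hz : z.im ≠ 0)
    (j : m) : ∑ k, ‖(A - z • 1)⁻¹ j k‖ ^ 2 = ((A - z • 1)⁻¹ j j).im / z.im := by
  -- the `(j, j)` entry of `G(z) - G(z)ᴴ = (z - z̄) G(z) G(z)ᴴ`
  have hid := congrFun (congrFun (inv_sub_smul_one_sub_inv (hA.isUnit_sub_smul_one hz)
    (hA.isUnit_sub_smul_one (z := conj z) (by simpa using hz))) j) j
  rw [← hA.conjTranspose_inv_sub_smul_one, smul_apply, mul_conjTranspose_self_apply_self,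
    sub_apply, conjTranspose_apply, Complex.star_def, smul_eq_mul] at hid
  rw [eq_div_iff hz, mul_comm]
  exact (im_eq_mul_of_sub_conj_eq hid).symm

theorem IsHermitian.sum_norm_sq_inv_sub_smul_one_apply' (hA : A.IsHermitian) (hz : z.im ≠ 0)
    (j : m) : ∑ k, ‖(A - z • 1)⁻¹ k j‖ ^ 2 = ((A - z • 1)⁻¹ j j).im / z.im := by
  -- the `(j, j)` entry of `G(z) - G(z)ᴴ = (z - z̄) G(z)ᴴ G(z)`
  have hid := congrFun (congrFun (inv_sub_smul_one_sub_inv' (hA.isUnit_sub_smul_one hz)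
    (hA.isUnit_sub_smul_one (z := conj z) (by simpa using hz))) j) j
  rw [← hA.conjTranspose_inv_sub_smul_one, smul_apply, conjTranspose_mul_self_apply_self,
    sub_apply, conjTranspose_apply, Complex.star_def, smul_eq_mul] at hid
  rw [eq_div_iff hz, mul_comm]
  exact (im_eq_mul_of_sub_conj_eq hid).symm

theorem IsHermitian.im_inv_sub_smul_one_apply_self_pos (hA : A.IsHermitian) (hz : 0 < z.im)
    (j : m) : 0 < ((A - z • 1)⁻¹ j j).im := by
  have hunit := (isUnit_nonsing_inv_iff.mpr (hA.isUnit_sub_smul_one hz.ne'))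
  obtain ⟨k, hk⟩ := exists_apply_ne_zero_of_isUnit hunit j
  have hsum : 0 < ∑ k, ‖(A - z • 1)⁻¹ j k‖ ^ 2 :=
    Finset.sum_pos' (fun _ _ => by positivity) ⟨k, Finset.mem_univ k, by positivity⟩
  rw [hA.sum_norm_sq_inv_sub_smul_one_apply hz.ne'] at hsum
  exact (div_pos_iff_of_pos_right hz).mp hsum

theorem IsHermitian.norm_inv_sub_smul_one_apply_self_sub_sq_le (hA : A.IsHermitian)
    (hz : z.im ≠ 0) (hw : w.im ≠ 0) (j : m) :
    ‖(A - z • 1)⁻¹ j j - (A - w • 1)⁻¹ j j‖ ^ 2 ≤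
      ‖z - w‖ ^ 2 * (((A - z • 1)⁻¹ j j).im / z.im) * (((A - w • 1)⁻¹ j j).im / w.im) := by
  rw [← sub_apply, inv_sub_smul_one_sub_inv (hA.isUnit_sub_smul_one hz)
    (hA.isUnit_sub_smul_one hw), smul_apply, mul_apply, smul_eq_mul, norm_mul, mul_pow,
    ← hA.sum_norm_sq_inv_sub_smul_one_apply hz, ← hA.sum_norm_sq_inv_sub_smul_one_apply' hw,
    mul_assoc]
  gcongr
  exact norm_sum_mul_sq_le _ _ _

theorem IsHermitian.norm_apply_self_sub_norm_apply_self_sq_le (hA : A.IsHermitian)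
    (hz : 0 < z.im) (hw : 0 < w.im) (j : m) :
    (‖(A - z • 1)⁻¹ j j‖ - ‖(A - w • 1)⁻¹ j j‖) ^ 2 ≤
      ‖z - w‖ ^ 2 * (‖(A - z • 1)⁻¹ j j‖ / z.im) * (‖(A - w • 1)⁻¹ j j‖ / w.im) :=
  calc (‖(A - z • 1)⁻¹ j j‖ - ‖(A - w • 1)⁻¹ j j‖) ^ 2
      ≤ ‖(A - z • 1)⁻¹ j j - (A - w • 1)⁻¹ j j‖ ^ 2 := by
        rw [sq_le_sq, abs_norm]
        exact abs_norm_sub_norm_le _ _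
    _ ≤ ‖z - w‖ ^ 2 * (((A - z • 1)⁻¹ j j).im / z.im) * (((A - w • 1)⁻¹ j j).im / w.im) :=
      hA.norm_inv_sub_smul_one_apply_self_sub_sq_le hz.ne' hw.ne' j
    _ ≤ _ := by
      have := div_nonneg (hA.im_inv_sub_smul_one_apply_self_pos hw j).le hw.le
      gcongr <;> exact Complex.im_le_norm _

end Matrix

theorem one_sub_div_lt_min_div_max {a b η η' : ℝ} (hb : 0 < b) (hη : 0 < η)
    (hη' : 0 < η') (h : (a - b) ^ 2 ≤ η' ^ 2 * (a / (η + η')) * (b / η)) :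
    1 - η' / η < min a b / max a b := by
  have hmax : 0 < max a b := lt_max_of_lt_right hb
  have hab : a * b ≤ max a b ^ 2 := by nlinarith [le_max_left a b, le_max_right a b]
  have hdist : |a - b| < η' / η * max a b := by
    refine abs_lt_of_sq_lt_sq ?_ (by positivity)
    calc (a - b) ^ 2 ≤ η' ^ 2 * (a * b) / ((η + η') * η) := by
          convert h using 1; field_simp
      _ ≤ η' ^ 2 * max a b ^ 2 / ((η + η') * η) := by gcongr
      _ < η' ^ 2 * max a b ^ 2 / (η * η) := by gcongr; linarith
      _ = (η' / η * max a b) ^ 2 := by field_simp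
  have hmin := max_sub_min_eq_abs' a b
  rw [lt_div_iff₀ hmax]
  linarith [show (1 - η' / η) * max a b = max a b - η' / η * max a b by ring]

theorem resolvent_diagonal_ratio_general
    (E η η' : ℝ) (hη : 0 < η) (hη' : 0 < η')
    (N : ℕ)
    (H : Matrix (Fin N) (Fin N) ℝ) (hH : H.IsSymm) :
    ∀ j : Fin N,
      1 - η' / η <
        min (‖resMat H ((E : ℂ) + (η + η') * Complex.I) j j‖)
            (‖resMat H ((E : ℂ) + η * Complex.I) j j‖) /
          max (‖resMat H ((E : ℂ) + (η + η') * Complex.I) j j‖)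
            (‖resMat H ((E : ℂ) + η * Complex.I) j j‖) := by
  intro j
  have hA : (H.map ((↑) : ℝ → ℂ)).IsHermitian :=
    (isHermitian_iff_isSymm.mpr hH).map _ fun _ => (conj_ofReal _).symm
  have hz' : ((E : ℂ) + (η + η') * I).im = η + η' := by simp
  have hz : ((E : ℂ) + η * I).im = η := by simp
  have hdist : ‖((E : ℂ) + (η + η') * I) - ((E : ℂ) + η * I)‖ = η' := by
    simp [← sub_mul, abs_of_pos hη']
  have key := hA.norm_apply_self_sub_norm_apply_self_sq_le (by rw [hz']; positivity)
    (by rwa [hz]) j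
  rw [hdist, hz', hz] at key
  exact one_sub_div_lt_min_div_max
    ((hA.im_inv_sub_smul_one_apply_self_pos (by rwa [hz]) j).trans_le (Complex.im_le_norm _))
    hη hη' key

theorem resolvent_diagonal_ratio
    (E η η' : ℝ) (hη : 0 < η) (hη' : 0 < η')
    (N : ℕ) (hN : 0 < N)
    (H : Matrix (Fin N) (Fin N) ℝ) (hH : H.IsSymm) :
    ∀ j : Fin N,
      1 - η' / η <
        min (‖resMat H ((E : ℂ) + (η + η') * Complex.I) j j‖)
            (‖resMat H ((E : ℂ) + η * Complex.I) j j‖) /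
          max (‖resMat H ((E : ℂ) + (η + η') * Complex.I) j j‖)
            (‖resMat H ((E : ℂ) + η * Complex.I) j j‖) :=
  resolvent_diagonal_ratio_general E η η' hη hη' N H hH
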